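/- Per-edge form of Theorem 3.1(3). Let p_i, p_j ∈ ℍ², f_i, f_j ∈ ℝ, and ξ_i, ξ_j ∈ ℝ³ with ⟨ξ_i, p_i⟩_M = 0 and ⟨ξ_j, p_j⟩_M = 0. Set q_i := f_i·p_i + ξ_i and q_j := f_j·p_j + ξ_j. Then ⟨q_j − q_i, p_j − p_i⟩_M = 0 if and only if ⟨ξ_j − ξ_i, p_j − p_i⟩_M = −((f_i + f_j)/2)·⟨p_j − p_i, p_j − p_i⟩_M. (The tangential component of a Minkowski-infinitesimally-isometric deformation of a polyhedron inscribed in the hyperboloid is a discrete conformal vector field with conformal factor equal to minus the radial coefficient.) -/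
import Mathlib


noncomputable section

/-- Minkowski inner product on `ℝ³` (signature `(−,+,+)`). -/
def mink (x y : Fin 3 → ℝ) : ℝ := -(x 0 * y 0) + x 1 * y 1 + x 2 * y 2

/-- The hyperboloid model of the hyperbolic plane. -/
def inH2 (x : Fin 3 → ℝ) : Prop := mink x x = -1 ∧ 0 < x 0

/-- Per-edge form of Theorem 3.1(3): for vertices on the hyperboloid, `q = f·p + ξ`
(with `ξ ⊥_M p`) is a Minkowski infinitesimal isometric deformation of the edge `p_i p_j`
iff the tangential component `ξ` is discretely conformal with conformal factors `−f`. -/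
theorem hyp_tangential_conformal
    (pi pj : Fin 3 → ℝ) (hpi : inH2 pi) (hpj : inH2 pj)
    (fi fj : ℝ) (ξi ξj : Fin 3 → ℝ)
    (hξi : mink ξi pi = 0) (hξj : mink ξj pj = 0) :
    mink ((fj • pj + ξj) - (fi • pi + ξi)) (pj - pi) = 0 ↔
      mink (ξj - ξi) (pj - pi) = -((fi + fj) / 2) * mink (pj - pi) (pj - pi) := by
  obtain ⟨hi, -⟩ := hpi
  obtain ⟨hj, -⟩ := hpj
  simp only [mink, inH2, Pi.add_apply, Pi.sub_apply, Pi.smul_apply, smul_eq_mul] at *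
  constructor <;> intro h
  · linear_combination h + ((fi - fj)/2) * hj + ((fj - fi)/2) * hi
  · linear_combination h + ((fj - fi)/2) * hj + ((fi - fj)/2) * hi
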